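/- arXiv:1404.7623 — 8 statements merged into one kernel-verified Lean document; each statement's English description precedes it below -/
import Mathlib

section
/- Let G be a finite simple graph on vertex set V that is facet-inducing, and let M ⊆ V be a homogeneous set of G, i.e., a module of G with 2 ≤ |M| < |V|. Then the induced subgraph G[M] is facet-inducing. -/
def IsStable {V : Type*} (G : SimpleGraph V) (S : Finset V) : Prop :=
  ∀ u ∈ S, ∀ w ∈ S, ¬ G.Adj u w

def MaxStable {V : Type*} (G : SimpleGraph V) (S : Finset V) : Prop :=
  IsStable G S ∧ ∀ T : Finset V, IsStable G T → S ⊆ T → S = T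

noncomputable def incVec {V : Type*} (S : Finset V) : V → ℝ :=
  Set.indicator (↑S) 1

def FacetInducing {V : Type*} (G : SimpleGraph V) : Prop :=
  ∃ c : V → ℝ,
    (∀ v, c v ≠ 0) ∧
    (∀ S : Finset V, IsStable G S → ∑ v ∈ S, c v ≤ 1) ∧
    ∃ S : Fin (Nat.card V) → Finset V,
      (∀ j, MaxStable G (S j)) ∧
      LinearIndependent ℝ (fun j => incVec (S j)) ∧
      ∀ j, ∑ v ∈ S j, c v = 1

/-!
Let `c` define the facet and `S j` be the tight maximal stable sets. A vertex outside the module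
`M` that misses one vertex of `M` misses all of them, so in a tight stable set meeting `M` the
part inside `M` can be exchanged for any stable `T ⊆ M`; validity of `c` then gives
`c(T) ≤ c(S j ∩ M)`. Hence all tight sets meeting `M` have the same weight `β` on `M`, and `β`
bounds `c` on the stable sets of `G[M]`. The traces `S j ∩ M` are maximal stable in `G[M]` and,
being restrictions of a basis of `ℝ^V`, span `ℝ^M`; as `c|M ≠ 0` this forces `β ≠ 0`, and
`c(S j ∩ M) ≥ 0` because `S j ∖ M` is stable. So `c / β` on `M`, with a basis chosen among the
traces, shows that `G[M]` is facet-inducing.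
-/

open Finset Submodule

section LinearAlgebra

theorem span_range_subtype_eq_top {K W ι : Type*} [Semiring K] [AddCommMonoid W] [Module K W]
    {v : ι → W} (hv : span K (Set.range v) = ⊤) {p : ι → Prop} (hp : ∀ i, ¬ p i → v i = 0) :
    span K (Set.range fun i : {i // p i} => v i) = ⊤ := by
  rw [eq_top_iff, ← hv, span_le]
  rintro _ ⟨i, rfl⟩
  by_cases hi : p i
  · exact subset_span ⟨⟨i, hi⟩, rfl⟩
  · rw [hp i hi]
    exact zero_mem _

theorem exists_linearIndependent_comp_of_span_eq_top {K W ι : Type*} [DivisionRing K]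
    [AddCommGroup W] [Module K W] [FiniteDimensional K W] {v : ι → W}
    (hv : span K (Set.range v) = ⊤) :
    ∃ g : Fin (Module.finrank K W) → ι, LinearIndependent K (v ∘ g) := by
  obtain ⟨κ, a, -, hspan, hli⟩ := exists_linearIndependent' K v
  let b := Module.Basis.mk hli (hspan.trans hv).ge
  have := FiniteDimensional.fintypeBasisIndex b
  let e := Fintype.equivFinOfCardEq (Module.finrank_eq_card_basis b).symm
  exact ⟨a ∘ e.symm, hli.comp e.symm e.symm.injective⟩

theorem eq_zero_of_dotProduct_eq_zero_of_span_eq_top {R n ι : Type*} [CommSemiring R] [Fintype n]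
    {w : n → R} {v : ι → n → R} (hv : span R (Set.range v) = ⊤) (hw : ∀ i, w ⬝ᵥ v i = 0) :
    w = 0 := by
  have : dotProductBilin R R w = 0 := LinearMap.ext_on_range hv hw
  exact dotProduct_eq_zero w fun u => LinearMap.congr_fun this u

theorem span_range_comp_subtype_val_eq_top {R V ι : Type*} [Semiring R] {v : ι → V → R}
    (hv : span R (Set.range v) = ⊤) (M : Set V) :
    span R (Set.range fun i => v i ∘ Subtype.val (p := (· ∈ M))) = ⊤ := by
  have hsurj :=
    LinearMap.funLeft_surjective_of_injective R R _ (Subtype.val_injective (p := (· ∈ M)))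
  rw [show (fun i => v i ∘ Subtype.val) = LinearMap.funLeft R R Subtype.val ∘ v from rfl,
    Set.range_comp, span_image, hv, Submodule.map_top, LinearMap.range_eq_top.2 hsurj]

end LinearAlgebra

section IncidenceVectors

variable {V : Type*}

theorem incVec_subtype (S : Finset V) (p : V → Prop) [DecidablePred p] :
    incVec (S.subtype p) = incVec S ∘ Subtype.val := by
  funext x
  by_cases hx : x.val ∈ S <;> simp [incVec, hx]

theorem dotProduct_incVec [Fintype V] (c : V → ℝ) (S : Finset V) :
    c ⬝ᵥ incVec S = ∑ v ∈ S, c v := by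
  classical
  simp [dotProduct, incVec, Set.indicator_apply, Finset.sum_ite_mem]

theorem span_range_incVec_subtype_eq_top {ι : Type*} {S : ι → Finset V}
    (hS : span ℝ (Set.range fun i => incVec (S i)) = ⊤) (M : Set V) [DecidablePred (· ∈ M)] :
    span ℝ (Set.range fun i : {i // ((S i).subtype (· ∈ M)).Nonempty} =>
      incVec ((S i).subtype (· ∈ M))) = ⊤ := by
  refine span_range_subtype_eq_top (v := fun i => incVec ((S i).subtype (· ∈ M))) ?_
    fun i hi => by simp [not_nonempty_iff_eq_empty.1 hi, incVec, Pi.zero_def]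
  simpa only [incVec_subtype] using span_range_comp_subtype_val_eq_top hS M

theorem ne_zero_of_forall_sum_eq_of_span_eq_top [Fintype V] {c : V → ℝ} (hc : c ≠ 0) {ι : Type*}
    {T : ι → Finset V} (hT : span ℝ (Set.range fun i => incVec (T i)) = ⊤) {β : ℝ}
    (hβ : ∀ i, ∑ v ∈ T i, c v = β) : β ≠ 0 := by
  rintro rfl
  exact hc (eq_zero_of_dotProduct_eq_zero_of_span_eq_top hT fun i => by
    rw [dotProduct_incVec, hβ i])

end IncidenceVectors

def SimpleGraph.IsModule {V : Type*} (G : SimpleGraph V) (M : Set V) : Prop :=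
  ∀ v ∉ M, (∀ m ∈ M, G.Adj v m) ∨ (∀ m ∈ M, ¬ G.Adj v m)

section StableSets

variable {V : Type*} {G : SimpleGraph V} {M : Set V} {S T : Finset V}

theorem IsStable.mono (hS : IsStable G S) (hTS : T ⊆ S) : IsStable G T :=
  fun u hu w hw => hS u (hTS hu) w (hTS hw)

theorem IsStable.subtype (hS : IsStable G S) (M : Set V) [DecidablePred (· ∈ M)] :
    IsStable (G.induce M) (S.subtype (· ∈ M)) :=
  fun u hu w hw => hS u (mem_subtype.1 hu) w (mem_subtype.1 hw)

theorem IsStable.map_subtype {T : Finset M} (hT : IsStable (G.induce M) T) :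
    IsStable G (T.map (Function.Embedding.subtype (· ∈ M))) := by
  simp only [IsStable, mem_map, Function.Embedding.coe_subtype, forall_exists_index, and_imp]
  rintro _ u hu rfl _ w hw rfl
  exact hT u hu w hw

theorem MaxStable.mem_of_forall_not_adj [DecidableEq V] {x : V} (hS : MaxStable G S)
    (hx : ∀ s ∈ S, ¬ G.Adj x s) : x ∈ S := by
  have hins : IsStable G (insert x S) := by
    simp only [IsStable, mem_insert, forall_eq_or_imp]
    refine ⟨⟨G.irrefl, hx⟩, fun u hu => ⟨fun h => hx u hu h.symm, hS.1 u hu⟩⟩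
  rw [hS.2 _ hins (subset_insert x S)]
  exact mem_insert_self x S

theorem IsStable.sum_subtype_nonneg {c : V → ℝ} (hc : ∀ S, IsStable G S → ∑ v ∈ S, c v ≤ 1)
    (hS : IsStable G S) (hSc : ∑ v ∈ S, c v = 1) (p : V → Prop) [DecidablePred p] :
    0 ≤ ∑ v ∈ S.subtype p, c v := by
  rw [sum_subtype_eq_sum_filter]
  linarith [hc _ (hS.mono (filter_subset (¬ p ·) S)), sum_filter_add_sum_filter_not S p c]

variable [DecidablePred (· ∈ M)]

theorem SimpleGraph.IsModule.not_adj_of_isStable (hM : G.IsModule M) (hS : IsStable G S)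
    (hSM : (S.subtype (· ∈ M)).Nonempty) {s m : V} (hs : s ∈ S) (hsM : s ∉ M) (hm : m ∈ M) :
    ¬ G.Adj s m := by
  obtain ⟨m₀, hm₀⟩ := hSM
  rcases hM s hsM with hadj | hnadj
  · exact absurd (hadj m₀ m₀.2) (hS s hs m₀ (mem_subtype.1 hm₀))
  · exact hnadj m hm

theorem SimpleGraph.IsModule.maxStable_subtype (hM : G.IsModule M) (hS : MaxStable G S)
    (hSM : (S.subtype (· ∈ M)).Nonempty) : MaxStable (G.induce M) (S.subtype (· ∈ M)) := by
  classical
  refine ⟨hS.1.subtype M, fun T hT hST => subset_antisymm hST fun x hx => ?_⟩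
  refine mem_subtype.2 (hS.mem_of_forall_not_adj fun s hs hxs => ?_)
  by_cases hsM : s ∈ M
  · exact hT x hx ⟨s, hsM⟩ (hST (mem_subtype.2 hs)) hxs
  · exact hM.not_adj_of_isStable hS.1 hSM hs hsM x.2 hxs.symm

theorem SimpleGraph.IsModule.isStable_filter_union [DecidableEq V] (hM : G.IsModule M)
    (hS : IsStable G S) (hSM : (S.subtype (· ∈ M)).Nonempty) (hT : IsStable G T) (hTM : ↑T ⊆ M) :
    IsStable G (S.filter (· ∉ M) ∪ T) := by
  have hST : ∀ s ∈ S.filter (· ∉ M), ∀ t ∈ T, ¬ G.Adj s t := fun s hs t ht =>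
    hM.not_adj_of_isStable hS hSM (mem_filter.1 hs).1 (mem_filter.1 hs).2 (hTM ht)
  intro u hu w hw
  rcases mem_union.1 hu with hu | hu <;> rcases mem_union.1 hw with hw | hw
  · exact hS u (mem_filter.1 hu).1 w (mem_filter.1 hw).1
  · exact hST u hu w hw
  · exact fun h => hST w hw u hu h.symm
  · exact hT u hu w hw

theorem SimpleGraph.IsModule.sum_le_sum_filter [DecidableEq V] {c : V → ℝ} (hM : G.IsModule M)
    (hc : ∀ S, IsStable G S → ∑ v ∈ S, c v ≤ 1) (hS : IsStable G S) (hSc : ∑ v ∈ S, c v = 1)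
    (hSM : (S.subtype (· ∈ M)).Nonempty) (hT : IsStable G T) (hTM : ↑T ⊆ M) :
    ∑ v ∈ T, c v ≤ ∑ v ∈ S.filter (· ∈ M), c v := by
  have hdisj : Disjoint (S.filter (· ∉ M)) T := Finset.disjoint_left.2
    fun v (hv : v ∈ S.filter (· ∉ M)) hvT => (mem_filter.1 hv).2 (hTM hvT)
  have h := hc _ (hM.isStable_filter_union hS hSM hT hTM)
  rw [sum_union hdisj] at h
  linarith [sum_filter_add_sum_filter_not S (· ∈ M) c]

theorem SimpleGraph.IsModule.sum_le_sum_subtype [DecidableEq V] {c : V → ℝ}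
    (hM : G.IsModule M) (hc : ∀ S, IsStable G S → ∑ v ∈ S, c v ≤ 1) (hS : IsStable G S)
    (hSc : ∑ v ∈ S, c v = 1) (hSM : (S.subtype (· ∈ M)).Nonempty) {T : Finset M}
    (hT : IsStable (G.induce M) T) : ∑ m ∈ T, c m ≤ ∑ m ∈ S.subtype (· ∈ M), c m := by
  rw [sum_subtype_eq_sum_filter]
  exact (sum_map T (Function.Embedding.subtype _) c).symm.trans_le
    (hM.sum_le_sum_filter hc hS hSc hSM hT.map_subtype (by simp))

theorem SimpleGraph.IsModule.sum_subtype_eq [DecidableEq V] {c : V → ℝ} (hM : G.IsModule M)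
    (hc : ∀ S, IsStable G S → ∑ v ∈ S, c v ≤ 1) (hS : IsStable G S) (hSc : ∑ v ∈ S, c v = 1)
    (hSM : (S.subtype (· ∈ M)).Nonempty) (hT : IsStable G T) (hTc : ∑ v ∈ T, c v = 1)
    (hTM : (T.subtype (· ∈ M)).Nonempty) :
    ∑ m ∈ S.subtype (· ∈ M), c m = ∑ m ∈ T.subtype (· ∈ M), c m :=
  le_antisymm (hM.sum_le_sum_subtype hc hT hTc hTM (hS.subtype M))
    (hM.sum_le_sum_subtype hc hS hSc hSM (hT.subtype M))

end StableSets

theorem facetInducing_of_span_eq_top {V ι : Type*} [Fintype V] {G : SimpleGraph V} {c : V → ℝ}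
    (hc0 : ∀ v, c v ≠ 0) (hc : ∀ S, IsStable G S → ∑ v ∈ S, c v ≤ 1) {S : ι → Finset V}
    (hmax : ∀ i, MaxStable G (S i)) (htight : ∀ i, ∑ v ∈ S i, c v = 1)
    (hspan : span ℝ (Set.range fun i => incVec (S i)) = ⊤) : FacetInducing G := by
  obtain ⟨g, hg⟩ := exists_linearIndependent_comp_of_span_eq_top hspan
  have hcard : Nat.card V = Module.finrank ℝ (V → ℝ) := by simp
  exact ⟨c, hc0, hc, S ∘ g ∘ Fin.cast hcard, fun _ => hmax _,
    hg.comp _ (Fin.cast_injective hcard), fun _ => htight _⟩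

theorem stmt1_general {V : Type*} [Fintype V] (G : SimpleGraph V) (hfi : FacetInducing G)
    (M : Set V)
    (hmod : ∀ v ∉ M, (∀ m ∈ M, G.Adj v m) ∨ (∀ m ∈ M, ¬ G.Adj v m))
    (h2 : 2 ≤ M.ncard) :
    FacetInducing (G.induce M) := by
  classical
  obtain ⟨c, hc0, hc, S, hmax, hli, htight⟩ := hfi
  have hM : G.IsModule M := hmod
  have hMne : Nonempty M := (Set.nonempty_of_ncard_ne_zero (by omega)).to_subtype
  let ι := {j // ((S j).subtype (· ∈ M)).Nonempty}
  have hspan : span ℝ (Set.range fun j : ι => incVec ((S j).subtype (· ∈ M))) = ⊤ :=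
    span_range_incVec_subtype_eq_top (hli.span_eq_top_of_card_eq_finrank' (by simp)) M
  obtain ⟨j₀⟩ : Nonempty ι := (isEmpty_or_nonempty ι).resolve_left fun h =>
    bot_ne_top (by rwa [Set.range_eq_empty, span_empty] at hspan)
  set β := ∑ m ∈ (S j₀).subtype (· ∈ M), c m
  have hβ (j : ι) : ∑ m ∈ (S j).subtype (· ∈ M), c m = β :=
    hM.sum_subtype_eq hc (hmax j).1 (htight j) j.2 (hmax j₀).1 (htight j₀) j₀.2
  obtain ⟨m⟩ := hMne
  have hβ_ne : β ≠ 0 := ne_zero_of_forall_sum_eq_of_span_eq_top (c := fun m : M => c m)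
    (Function.ne_iff.2 ⟨m, hc0 m⟩) hspan hβ
  have hβ_pos : 0 < β :=
    ((hmax j₀).1.sum_subtype_nonneg hc (htight j₀) (· ∈ M)).lt_of_ne hβ_ne.symm
  refine facetInducing_of_span_eq_top (c := fun m => c m / β)
    (S := fun j : ι => (S j).subtype (· ∈ M)) (fun m => div_ne_zero (hc0 m) hβ_ne)
    (fun T hT => ?_) (fun j => hM.maxStable_subtype (hmax j) j.2)
    (fun j => by rw [← sum_div, hβ j, div_self hβ_ne]) hspan
  rw [← sum_div, div_le_one hβ_pos]
  exact hM.sum_le_sum_subtype hc (hmax j₀).1 (htight j₀) j₀.2 hT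

theorem stmt1 {V : Type*} [Fintype V] (G : SimpleGraph V) (hfi : FacetInducing G)
    (M : Set V)
    (hmod : ∀ v ∉ M, (∀ m ∈ M, G.Adj v m) ∨ (∀ m ∈ M, ¬ G.Adj v m))
    (h2 : 2 ≤ M.ncard) (hlt : M.ncard < Fintype.card V) :
    FacetInducing (G.induce M) :=
  stmt1_general G hfi M hmod h2
end

section
/- Every facet-inducing finite simple graph is connected. -/
theorem stmt2 {V : Type*} [Fintype V] [Nonempty V] (G : SimpleGraph V)
    (hfi : FacetInducing G) : G.Connected := by
  classical
  obtain ⟨c, hc0, hstab, S, hmax, hli, hsum⟩ := hfi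
  rw [SimpleGraph.connected_iff]
  refine ⟨fun a b => ?_, inferInstance⟩
  by_contra hab
  set P : V → Prop := fun v => G.Reachable a v with hP
  have hPa : P a := SimpleGraph.Reachable.refl a
  have hPb : ¬ P b := hab
  have hcross : ∀ u w, P u → ¬ P w → ¬ G.Adj u w := by
    intro u w hu hw hadj
    exact hw (hu.trans hadj.reachable)
  -- sum split
  have pApB : ∀ j, (∑ v ∈ (S j).filter P, c v) + (∑ v ∈ (S j).filter (fun v => ¬ P v), c v) = 1 := by
    intro j
    rw [Finset.sum_filter_add_sum_filter_not]
    exact hsum j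
  -- mixed sets are stable
  have hstab' : ∀ j k, IsStable G ((S j).filter P ∪ (S k).filter (fun v => ¬ P v)) := by
    intro j k u hu w hw hadj
    simp only [Finset.mem_union, Finset.mem_filter] at hu hw
    rcases hu with ⟨hu1, hu2⟩ | ⟨hu1, hu2⟩ <;> rcases hw with ⟨hw1, hw2⟩ | ⟨hw1, hw2⟩
    · exact (hmax j).1 u hu1 w hw1 hadj
    · exact hcross u w hu2 hw2 hadj
    · exact hcross w u hw2 hu2 hadj.symm
    · exact (hmax k).1 u hu1 w hw1 hadj
  have hdisj : ∀ j k, Disjoint ((S j).filter P) ((S k).filter (fun v => ¬ P v)) := by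
    intro j k
    rw [Finset.disjoint_left]
    intro u hu hu'
    exact (Finset.mem_filter.1 hu').2 (Finset.mem_filter.1 hu).2
  have hle : ∀ j k, (∑ v ∈ (S j).filter P, c v) + (∑ v ∈ (S k).filter (fun v => ¬ P v), c v) ≤ 1 := by
    intro j k
    have h := hstab _ (hstab' j k)
    rwa [Finset.sum_union (hdisj j k)] at h
  have hnpos : 0 < Nat.card V := Nat.card_pos
  set j0 : Fin (Nat.card V) := ⟨0, hnpos⟩ with hj0
  set α : ℝ := ∑ v ∈ (S j0).filter P, c v with hα
  set β : ℝ := ∑ v ∈ (S j0).filter (fun v => ¬ P v), c v with hβ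
  have hαβ : α + β = 1 := pApB j0
  have hconst : ∀ j, (∑ v ∈ (S j).filter P, c v) = α ∧
      (∑ v ∈ (S j).filter (fun v => ¬ P v), c v) = β := by
    intro j
    have h1 := hle j j0
    have h2 := hle j0 j
    have h3 := pApB j
    constructor <;> linarith
  -- the functional
  set d : V → ℝ := fun v => if P v then β * c v else -(α * c v) with hd
  let L : (V → ℝ) →ₗ[ℝ] ℝ :=
    { toFun := fun x => ∑ v, d v * x v
      map_add' := fun x y => by simp [mul_add, Finset.sum_add_distrib]
      map_smul' := fun r x => by
        simp only [Pi.smul_apply, smul_eq_mul, RingHom.id_apply, Finset.mul_sum]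
        exact Finset.sum_congr rfl fun v _ => by ring }
  have hLT : ∀ T : Finset V, L (incVec T) = ∑ v ∈ T, d v := by
    intro T
    show (∑ v, d v * incVec T v) = _
    have : ∀ v, d v * incVec T v = if v ∈ T then d v else 0 := by
      intro v
      simp only [incVec, Set.indicator_apply, Pi.one_apply, Finset.mem_coe]
      split <;> simp
    simp only [this]
    rw [Finset.sum_ite_mem, Finset.univ_inter]
  have hLS : ∀ j, L (incVec (S j)) = 0 := by
    intro j
    rw [hLT]
    have : (∑ v ∈ S j, d v) = (∑ v ∈ (S j).filter P, β * c v) +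
        (∑ v ∈ (S j).filter (fun v => ¬ P v), -(α * c v)) := Finset.sum_ite _ _
    rw [this]
    have h1 := (hconst j).1
    have h2 := (hconst j).2
    rw [← Finset.mul_sum, Finset.sum_neg_distrib, ← Finset.mul_sum, h1, h2]
    ring
  -- basis
  have : Nonempty (Fin (Nat.card V)) := ⟨j0⟩
  have hcard : Fintype.card (Fin (Nat.card V)) = Module.finrank ℝ (V → ℝ) := by
    simp [Nat.card_eq_fintype_card, Module.finrank_fintype_fun_eq_card]
  let B := basisOfLinearIndependentOfCardEqFinrank hli hcard
  have hB : ∀ j, B j = incVec (S j) := fun j =>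
    coe_basisOfLinearIndependentOfCardEqFinrank hli hcard ▸ rfl
  have hL0 : L = 0 := by
    apply B.ext
    intro j
    rw [hB j, hLS j]
    rfl
  have hda : ∀ v : V, d v = 0 := by
    intro v
    have : L ((Pi.single v 1 : V → ℝ)) = 0 := by rw [hL0]; rfl
    have h2 : (∑ u, d u * (Pi.single v 1 : V → ℝ) u) = d v := by
      rw [Finset.sum_eq_single v]
      · simp
      · intro u _ hu; simp [Pi.single_apply, hu]
      · intro h; exact absurd (Finset.mem_univ v) h
    rw [show L ((Pi.single v 1 : V → ℝ)) = ∑ u, d u * (Pi.single v 1 : V → ℝ) u from rfl, h2] at this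
    exact this
  have hβ0 : β = 0 := by
    have := hda a
    simp only [hd, if_pos hPa] at this
    exact (mul_eq_zero.1 this).resolve_right (hc0 a)
  have hα0 : α = 0 := by
    have := hda b
    simp only [hd, if_neg hPb, neg_eq_zero] at this
    exact (mul_eq_zero.1 this).resolve_right (hc0 b)
  rw [hα0, hβ0] at hαβ
  norm_num at hαβ
end

section
/- Let G be a facet-inducing finite simple graph on vertex set V. Then G has no clique cutset: there is no clique W ⊆ V (a set of pairwise adjacent vertices) with V ∖ W ≠ ∅ such that the induced subgraph G[V ∖ W] is disconnected. -/
noncomputable def evalLin {V : Type*} [Fintype V] (d : V → ℝ) : (V → ℝ) →ₗ[ℝ] ℝ where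
  toFun x := ∑ v, d v * x v
  map_add' x y := by simp [mul_add, Finset.sum_add_distrib]
  map_smul' r x := by simp [Finset.mul_sum, mul_left_comm]

lemma sum_indicator_mul {V : Type*} [Fintype V] (d : V → ℝ) (S : Finset V) :
    ∑ v, d v * incVec S v = ∑ v ∈ S, d v := by
  classical
  have h : ∀ v, d v * incVec S v = if v ∈ S then d v else 0 := by
    intro v
    by_cases hv : v ∈ S <;> simp [incVec, Set.indicator, hv]
  simp_rw [h]
  simp [Finset.sum_ite_mem]

lemma evalLin_single {V : Type*} [Fintype V] [DecidableEq V] (d : V → ℝ) (v : V) :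
    evalLin d (Pi.single v 1) = d v := by
  classical
  have h : (evalLin d) (Pi.single v 1) = ∑ u, d u * (Pi.single v 1 : V → ℝ) u := rfl
  rw [h]
  simp [Pi.single_apply, Finset.sum_ite_eq']

theorem stmt3 {V : Type*} [Fintype V] (G : SimpleGraph V) (hfi : FacetInducing G) :
    ¬ ∃ W : Set V, G.IsClique W ∧ (Wᶜ).Nonempty ∧ ¬ (G.induce Wᶜ).Connected := by
  classical
  rintro ⟨W, hWcl, hWc, hWd⟩
  obtain ⟨c, hc0, hval, S, hmax, hlin, htight⟩ := hfi
  have hstab : ∀ j, IsStable G (S j) := fun j => (hmax j).1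
  have hne : Nonempty ↑(Wᶜ) := hWc.to_subtype
  have hpre : ¬ (G.induce Wᶜ).Preconnected := fun h => hWd ((G.induce Wᶜ).connected_iff.mpr ⟨h, hne⟩)
  rw [SimpleGraph.Preconnected] at hpre
  push_neg at hpre
  obtain ⟨x, y, hxy⟩ := hpre
  set A : Set V := {v | ∃ h : v ∈ Wᶜ, (G.induce Wᶜ).Reachable x ⟨v, h⟩} with hA
  set B : Set V := Wᶜ \ A with hB
  have hxA : (x : V) ∈ A := ⟨x.2, SimpleGraph.Reachable.refl _⟩
  have hAW : ∀ v ∈ A, v ∉ W := fun v hv => hv.1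
  have hyB : (y : V) ∈ B := by
    refine ⟨y.2, ?_⟩
    rintro ⟨h, hr⟩
    exact hxy hr
  have hAB : ∀ a ∈ A, ∀ b ∈ B, ¬ G.Adj a b := by
    rintro a ⟨ha, hra⟩ b hb hadj
    exact hb.2 ⟨hb.1, hra.trans (SimpleGraph.Adj.reachable
      (show (G.induce Wᶜ).Adj ⟨a, ha⟩ ⟨b, hb.1⟩ from hadj))⟩
  -- sum splitting lemmas
  have hmemB : ∀ v : V, v ∈ B ↔ (v ∉ A ∧ v ∉ W) := by
    intro v
    constructor
    · intro hv; exact ⟨hv.2, hv.1⟩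
    · rintro ⟨h1, h2⟩; exact ⟨h2, h1⟩
  have hsplit : ∀ (d : V → ℝ) (T : Finset V),
      ∑ v ∈ T, d v = (∑ v ∈ T.filter (fun v => v ∈ A ∨ v ∈ W), d v)
        + ∑ v ∈ T.filter (fun v => v ∈ B), d v := by
    intro d T
    rw [← Finset.sum_filter_add_sum_filter_not T (fun v => v ∈ A ∨ v ∈ W)]
    congr 1
    apply Finset.sum_congr _ fun _ _ => rfl
    apply Finset.filter_congr
    intro v _
    rw [hmemB v]
    tauto
  have hsplit2 : ∀ (d : V → ℝ) (T : Finset V),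
      ∑ v ∈ T.filter (fun v => v ∈ A ∨ v ∈ W), d v
        = (∑ v ∈ T.filter (fun v => v ∈ A), d v)
          + ∑ v ∈ T.filter (fun v => v ∈ W), d v := by
    intro d T
    rw [← Finset.sum_filter_add_sum_filter_not (T.filter (fun v => v ∈ A ∨ v ∈ W))
      (fun v => v ∈ A), Finset.filter_filter, Finset.filter_filter]
    congr 1
    · apply Finset.sum_congr _ fun _ _ => rfl
      apply Finset.filter_congr
      intro v _
      tauto
    · apply Finset.sum_congr _ fun _ _ => rfl
      apply Finset.filter_congr
      intro v _
      constructor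
      · rintro ⟨h1, h2⟩
        rcases h1 with h | h
        · exact absurd h h2
        · exact h
      · intro hW
        exact ⟨Or.inr hW, fun hA' => hAW v hA' hW⟩
  -- the exchange inequality
  have exch : ∀ Sa Sb : Finset V, IsStable G Sa → IsStable G Sb →
      Sa.filter (fun v => v ∈ W) = Sb.filter (fun v => v ∈ W) → (∑ v ∈ Sb, c v = 1) →
      (∑ v ∈ Sa.filter (fun v => v ∈ A ∨ v ∈ W), c v)
        ≤ ∑ v ∈ Sb.filter (fun v => v ∈ A ∨ v ∈ W), c v := by
    intro Sa Sb hSa hSb hWeq h1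
    have hdisj : Disjoint (Sa.filter (fun v => v ∈ A ∨ v ∈ W))
        (Sb.filter (fun v => v ∈ B)) := by
      rw [Finset.disjoint_left]
      intro v hv hv'
      have hvB := (hmemB v).mp (Finset.mem_filter.mp hv').2
      rcases (Finset.mem_filter.mp hv).2 with h | h
      · exact hvB.1 h
      · exact hvB.2 h
    have cross : ∀ u w : V, u ∈ Sa.filter (fun v => v ∈ A ∨ v ∈ W) →
        w ∈ Sb.filter (fun v => v ∈ B) → ¬ G.Adj u w := by
      intro u w hu hw hadj
      obtain ⟨huS, huAW⟩ := Finset.mem_filter.mp hu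
      obtain ⟨hwS, hwB⟩ := Finset.mem_filter.mp hw
      rcases huAW with h | h
      · exact hAB u h w hwB hadj
      · have huSb : u ∈ Sb := by
          have : u ∈ Sb.filter (fun v => v ∈ W) := hWeq ▸ Finset.mem_filter.mpr ⟨huS, h⟩
          exact (Finset.mem_filter.mp this).1
        exact hSb u huSb w hwS hadj
    have hUstab : IsStable G (Sa.filter (fun v => v ∈ A ∨ v ∈ W)
        ∪ Sb.filter (fun v => v ∈ B)) := by
      intro u hu w hw hadj
      rcases Finset.mem_union.mp hu with hu' | hu' <;>
        rcases Finset.mem_union.mp hw with hw' | hw'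
      · exact hSa u (Finset.mem_filter.mp hu').1 w (Finset.mem_filter.mp hw').1 hadj
      · exact cross u w hu' hw' hadj
      · exact cross w u hw' hu' hadj.symm
      · exact hSb u (Finset.mem_filter.mp hu').1 w (Finset.mem_filter.mp hw').1 hadj
    have hle := hval _ hUstab
    rw [Finset.sum_union hdisj] at hle
    rw [hsplit c Sb] at h1
    linarith
  have gconst : ∀ j j' : Fin (Nat.card V),
      (S j).filter (fun v => v ∈ W) = (S j').filter (fun v => v ∈ W) →
      (∑ v ∈ (S j).filter (fun v => v ∈ A ∨ v ∈ W), c v)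
        = ∑ v ∈ (S j').filter (fun v => v ∈ A ∨ v ∈ W), c v :=
    fun j j' h => le_antisymm (exch _ _ (hstab j) (hstab j') h (htight j'))
      (exch _ _ (hstab j') (hstab j) h.symm (htight j))
  -- class structure
  have hclass : ∀ j : Fin (Nat.card V),
      (S j).filter (fun v => v ∈ W) = ∅ ∨ ∃ k, (S j).filter (fun v => v ∈ W) = {k} := by
    intro j
    have hcard : ((S j).filter (fun v => v ∈ W)).card ≤ 1 := by
      rw [Finset.card_le_one]
      intro a ha b hb
      by_contra hne'
      obtain ⟨haT, haW⟩ := Finset.mem_filter.mp ha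
      obtain ⟨hbT, hbW⟩ := Finset.mem_filter.mp hb
      exact hstab j a haT b hbT (hWcl haW hbW hne')
    rcases Nat.le_one_iff_eq_zero_or_eq_one.mp hcard with h | h
    · left; exact Finset.card_eq_zero.mp h
    · right; exact Finset.card_eq_one.mp h
  set β : ℝ := if h : ∃ j : Fin (Nat.card V), (S j).filter (fun v => v ∈ W) = ∅ then
      ∑ v ∈ (S h.choose).filter (fun v => v ∈ A ∨ v ∈ W), c v else 0 with hβ
  set f : V → ℝ := fun k =>
    if h : ∃ j : Fin (Nat.card V), (S j).filter (fun v => v ∈ W) = {k} then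
      c k + β - ∑ v ∈ (S h.choose).filter (fun v => v ∈ A ∨ v ∈ W), c v else 0 with hf
  set L : V → ℝ := fun v => if v ∈ A then c v else if v ∈ W then f v else 0 with hL
  have hLA : ∀ v ∈ A, L v = c v := by
    intro v hv; rw [hL]; simp only; rw [if_pos hv]
  have hLW : ∀ v ∈ W, L v = f v := by
    intro v hv; rw [hL]; simp only; rw [if_neg (fun h => hAW v h hv), if_pos hv]
  have hLB : ∀ v ∈ B, L v = 0 := by
    intro v hv
    have := (hmemB v).mp hv
    rw [hL]; simp only; rw [if_neg this.1, if_neg this.2]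
  have hLsum : ∀ j : Fin (Nat.card V), ∑ v ∈ S j, L v = β := by
    intro j
    rw [hsplit L (S j), hsplit2 L (S j)]
    have hBzero : ∑ v ∈ (S j).filter (fun v => v ∈ B), L v = 0 :=
      Finset.sum_eq_zero fun v hv => hLB v (Finset.mem_filter.mp hv).2
    have hAc : ∑ v ∈ (S j).filter (fun v => v ∈ A), L v
        = ∑ v ∈ (S j).filter (fun v => v ∈ A), c v :=
      Finset.sum_congr rfl fun v hv => hLA v (Finset.mem_filter.mp hv).2
    have hWf : ∑ v ∈ (S j).filter (fun v => v ∈ W), L v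
        = ∑ v ∈ (S j).filter (fun v => v ∈ W), f v :=
      Finset.sum_congr rfl fun v hv => hLW v (Finset.mem_filter.mp hv).2
    rw [hBzero, hAc, hWf, add_zero]
    rcases hclass j with hE | ⟨k, hk⟩
    · have hex : ∃ j : Fin (Nat.card V), (S j).filter (fun v => v ∈ W) = ∅ := ⟨j, hE⟩
      have hgj := gconst j hex.choose (by rw [hE, hex.choose_spec])
      have h2 := hsplit2 c (S j)
      rw [hE, Finset.sum_empty, add_zero] at h2 ⊢
      rw [hβ, dif_pos hex]
      linarith
    · have hex : ∃ j : Fin (Nat.card V), (S j).filter (fun v => v ∈ W) = {k} := ⟨j, hk⟩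
      have hkW : k ∈ W := by
        have : k ∈ (S j).filter (fun v => v ∈ W) := by rw [hk]; exact Finset.mem_singleton_self k
        exact (Finset.mem_filter.mp this).2
      have hfk : f k = c k + β - ∑ v ∈ (S hex.choose).filter (fun v => v ∈ A ∨ v ∈ W), c v := by
        rw [hf]; exact dif_pos hex
      have hgj := gconst j hex.choose (by rw [hk, hex.choose_spec])
      have h2 := hsplit2 c (S j)
      rw [hk, Finset.sum_singleton] at h2 ⊢
      rw [hfk]
      linarith
  -- linear algebra
  set d : V → ℝ := fun v => L v - β * c v with hd
  have hdsum : ∀ j : Fin (Nat.card V), ∑ v ∈ S j, d v = 0 := by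
    intro j
    have : ∑ v ∈ S j, d v = (∑ v ∈ S j, L v) - β * ∑ v ∈ S j, c v := by
      rw [Finset.mul_sum, ← Finset.sum_sub_distrib]
    rw [this, hLsum j, htight j, mul_one, sub_self]
  have hphi : ∀ j, evalLin d (incVec (S j)) = 0 := by
    intro j
    show ∑ v, d v * incVec (S j) v = 0
    rw [sum_indicator_mul]
    exact hdsum j
  have hcard : Fintype.card (Fin (Nat.card V)) = Module.finrank ℝ (V → ℝ) := by
    simp [Nat.card_eq_fintype_card]
  have hneV : Nonempty V := ⟨↑x⟩
  have hneF : Nonempty (Fin (Nat.card V)) :=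
    ⟨⟨0, by simp [Nat.card_eq_fintype_card, Fintype.card_pos]⟩⟩
  have hspan := hlin.span_eq_top_of_card_eq_finrank hcard
  have hzero : ∀ v : V, d v = 0 := by
    intro v
    have hsub : Set.range (fun j => incVec (S j)) ⊆ (LinearMap.ker (evalLin d) : Set (V → ℝ)) := by
      rintro _ ⟨j, rfl⟩
      exact hphi j
    have hker := Submodule.span_le.mpr hsub
    rw [hspan] at hker
    have hmem : Pi.single v (1:ℝ) ∈ LinearMap.ker (evalLin d) := hker trivial
    have := LinearMap.mem_ker.mp hmem
    rwa [evalLin_single] at this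
  have hy := hzero ↑y
  rw [hd] at hy
  simp only at hy
  rw [hLB _ hyB] at hy
  have hβ0 : β = 0 := by
    rcases mul_eq_zero.mp (by linarith : β * c ↑y = 0) with h | h
    · exact h
    · exact absurd h (hc0 ↑y)
  have hx := hzero ↑x
  rw [hd] at hx
  simp only at hx
  rw [hLA _ hxA, hβ0, zero_mul, sub_zero] at hx
  exact hc0 ↑x hx
end

section
/- Let G be a finite simple graph on vertex set V with n = |V|, let c : V → ℝ with c_v ≠ 0 for every v, suppose ∑_{v∈S} c_v ≤ 1 for every stable set S of G, and let S_1, ..., S_n be maximal stable sets of G whose incidence vectors are linearly independent and which satisfy ∑_{v∈S_j} c_v = 1 for each j. If a vertex u ∈ V belongs to exactly one of the sets S_1, ..., S_n, then the induced subgraph G[V ∖ {u}] is facet-inducing. -/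
theorem stmt4 {V : Type*} [Fintype V] (G : SimpleGraph V) (c : V → ℝ)
    (hc : ∀ u, c u ≠ 0)
    (hvalid : ∀ S : Finset V, IsStable G S → ∑ u ∈ S, c u ≤ 1)
    (S : Fin (Fintype.card V) → Finset V)
    (hmax : ∀ j, MaxStable G (S j))
    (hind : LinearIndependent ℝ (fun j => incVec (S j)))
    (hone : ∀ j, ∑ u ∈ S j, c u = 1)
    (u : V) (hcrit : ∃! j, u ∈ S j) :
    FacetInducing (G.induce ({u}ᶜ : Set V)) := by
  classical
  obtain ⟨j₀, hj₀u, huniq⟩ := hcrit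
  set W : Set V := {u}ᶜ with hW
  have hnotin : ∀ j : Fin (Fintype.card V), j ≠ j₀ → u ∉ S j := by
    intro j hj h; exact hj (huniq j h)
  have hsubW : ∀ j : Fin (Fintype.card V), j ≠ j₀ → ∀ v ∈ S j, v ∈ W := by
    intro j hj v hv
    simp only [hW, Set.mem_compl_iff, Set.mem_singleton_iff]
    rintro rfl; exact hnotin j hj hv
  -- index equivalence
  have hcard : Fintype.card (Fin (Nat.card ↥W)) =
      Fintype.card {j : Fin (Fintype.card V) // j ≠ j₀} := by
    rw [Fintype.card_fin, Nat.card_eq_fintype_card]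
    have hfil : Finset.univ.filter (fun v => v ∈ W) = Finset.univ.erase u := by
      ext v; simp [hW, and_comm]
    have h1 : Fintype.card ↥W = Fintype.card V - 1 := by
      rw [Fintype.card_subtype, hfil, Finset.card_erase_of_mem (Finset.mem_univ u),
        Finset.card_univ]
    have h2 : Fintype.card {j : Fin (Fintype.card V) // j ≠ j₀} =
        Fintype.card V - 1 := by
      simp [Fintype.card_subtype_compl, Fintype.card_subtype_eq]
    rw [h1, h2]
  let e : Fin (Nat.card ↥W) ≃ {j : Fin (Fintype.card V) // j ≠ j₀} :=
    Fintype.equivOfCardEq hcard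
  -- the new facet sets
  let S' : Fin (Nat.card ↥W) → Finset ↥W :=
    fun k => (S (e k)).subtype (· ∈ W)
  have hinc : ∀ (s : Finset V) (w : ↥W),
      incVec (s.subtype (· ∈ W)) w = incVec s ↑w := by
    intro s w
    simp [incVec, Set.indicator_apply, Finset.mem_subtype]
  have hfilter : ∀ (k : Fin (Nat.card ↥W)),
      (S (e k)).filter (· ∈ W) = S (e k) := by
    intro k
    apply Finset.filter_eq_self.2
    intro v hv
    exact hsubW _ (e k).2 v hv
  have hcardS' : ∀ k, (S' k).card = (S (e k)).card := by
    intro k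
    rw [show (S' k).card = ((S (e k)).filter (· ∈ W)).card from Finset.card_subtype _ _,
      hfilter]
  have hsumS' : ∀ k, ∑ w ∈ S' k, c ↑w = ∑ v ∈ S (e k), c v := by
    intro k
    rw [show S' k = (S ↑(e k)).subtype (· ∈ W) from rfl,
      Finset.sum_subtype_eq_sum_filter, hfilter]
  -- adjacency in induced graph
  have hadj : ∀ w₁ w₂ : ↥W, (G.induce W).Adj w₁ w₂ ↔ G.Adj ↑w₁ ↑w₂ := by
    intro w₁ w₂; rfl
  -- stability transfer
  have hstabmap : ∀ T : Finset ↥W, IsStable (G.induce W) T →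
      IsStable G (T.map (Function.Embedding.subtype _)) := by
    intro T hT a ha b hb hab
    obtain ⟨a', ha', rfl⟩ := Finset.mem_map.1 ha
    obtain ⟨b', hb', rfl⟩ := Finset.mem_map.1 hb
    exact hT a' ha' b' hb' ((hadj a' b').2 hab)
  refine ⟨fun w => c ↑w, fun w => hc ↑w, ?_, S', ?_, ?_, ?_⟩
  · -- validity
    intro T hT
    have := hvalid (T.map (Function.Embedding.subtype _)) (hstabmap T hT)
    rwa [Finset.sum_map] at this
  · -- maximality
    intro k
    constructor
    · intro a ha b hb hab
      exact (hmax (e k)).1 ↑a (Finset.mem_subtype.1 ha) ↑b (Finset.mem_subtype.1 hb)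
        ((hadj a b).1 hab)
    · intro T hT hsub
      have hTmap := hstabmap T hT
      have hSsub : S (e k) ⊆ T.map (Function.Embedding.subtype _) := by
        intro v hv
        have hvW : v ∈ W := hsubW _ (e k).2 v hv
        have : (⟨v, hvW⟩ : ↥W) ∈ S' k := Finset.mem_subtype.2 hv
        exact Finset.mem_map.2 ⟨⟨v, hvW⟩, hsub this, rfl⟩
      have heq := (hmax (e k)).2 _ hTmap hSsub
      apply Finset.eq_of_subset_of_card_le hsub
      rw [hcardS' k, heq, Finset.card_map]
  · -- linear independence
    have h1 : LinearIndependent ℝ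
        (fun j : {j : Fin (Fintype.card V) // j ≠ j₀} => incVec (S ↑j)) :=
      hind.comp _ Subtype.val_injective
    let R : (V → ℝ) →ₗ[ℝ] (↥W → ℝ) := LinearMap.funLeft ℝ ℝ Subtype.val
    have hdisj : Disjoint (Submodule.span ℝ (Set.range
        (fun j : {j : Fin (Fintype.card V) // j ≠ j₀} => incVec (S ↑j))))
        (LinearMap.ker R) := by
      have hspan0 : ∀ y ∈ Submodule.span ℝ (Set.range
          (fun j : {j : Fin (Fintype.card V) // j ≠ j₀} => incVec (S ↑j))), y u = 0 := by
        intro y hy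
        induction hy using Submodule.span_induction with
        | mem z hz =>
            obtain ⟨j, rfl⟩ := hz
            have : u ∉ S ↑j := hnotin _ j.2
            simp [incVec, Set.indicator_apply, this]
        | zero => rfl
        | add y z _ _ hy hz => simp [hy, hz]
        | smul a y _ hy => simp [hy]
      rw [Submodule.disjoint_def]
      intro x hx hker
      have hxu : x u = 0 := hspan0 x hx
      have hker' : ∀ w : ↥W, x ↑w = 0 := by
        intro w
        have := LinearMap.mem_ker.1 hker
        exact congrFun this w
      funext v
      by_cases hv : v = u
      · rw [hv]; exact hxu
      · exact hker' ⟨v, by simp [hW, hv]⟩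
    have h2 := h1.map hdisj
    have h3 := h2.comp e e.injective
    have : (fun k => incVec (S' k)) =
        ((R ∘ fun j : {j : Fin (Fintype.card V) // j ≠ j₀} => incVec (S ↑j)) ∘ e) := by
      funext k
      funext w
      rw [hinc]
      rfl
    rw [this]
    exact h3
  · -- sum = 1
    intro k
    rw [hsumS' k]
    exact hone (e k)
end

section
/- Let G be a facet-inducing finite simple graph on vertex set V, and let H ⊆ V be nonempty and such that the induced subgraph G[H] is repeating for G, meaning: for every maximal stable set S of G with S ∩ H ≠ ∅, the set S ∩ H is a maximal stable set of G[H]. Then there exist |H| maximal stable sets of G[H] whose incidence vectors (in ℝ^H) are linearly independent. -/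
/-- A maximal stable set of the subgraph of `G` induced by `H`, phrased with
subsets of the ambient vertex set. -/
def MaxStableWithin {V : Type*} (G : SimpleGraph V) (H : Finset V) (S : Finset V) : Prop :=
  S ⊆ H ∧ IsStable G S ∧ ∀ T : Finset V, T ⊆ H → IsStable G T → S ⊆ T → S = T


/-!
Restriction to `H` is a surjective linear map `ℝ^V → ℝ^H`. Since `G` is facet-inducing, the
incidence vectors of maximal stable sets of `G` span `ℝ^V`, so their restrictions span `ℝ^H`.
Because `G[H]` is repeating, each restriction is either `0` or the incidence vector of the
maximal stable set `S ∩ H` of `G[H]`; hence these incidence vectors span `ℝ^H`, and any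
spanning set of an `|H|`-dimensional space contains `|H|` linearly independent vectors.
-/

open Module Submodule

theorem exists_linearIndependent_fin_of_span_eq_top {K M : Type*} [DivisionRing K]
    [AddCommGroup M] [Module K M] [FiniteDimensional K M] {s : Set M} (hs : span K s = ⊤)
    {n : ℕ} (hn : finrank K M = n) :
    ∃ f : Fin n → M, (∀ i, f i ∈ s) ∧ LinearIndependent K f := by
  let b := Basis.ofSpan hs.ge
  have : Fintype _ := FiniteDimensional.fintypeBasisIndex b
  let e := Fintype.equivFinOfCardEq ((finrank_eq_card_basis b).symm.trans hn)
  refine ⟨b.reindex e, fun i => ?_, (b.reindex e).linearIndependent⟩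
  rw [Basis.reindex_apply]
  exact Basis.ofSpan_subset hs.ge (Set.mem_range_self _)

section

variable {V : Type*}

theorem FacetInducing.span_incVec_maxStable [Fintype V] {G : SimpleGraph V}
    (hG : FacetInducing G) : span ℝ (incVec '' {S | MaxStable G S}) = ⊤ := by
  obtain ⟨-, -, -, S, hS, hli, -⟩ := hG
  refine eq_top_iff.2 ((hli.span_eq_top_of_card_eq_finrank' ?_).ge.trans (span_mono ?_))
  · simp [Nat.card_eq_fintype_card]
  · rintro _ ⟨j, rfl⟩
    exact ⟨S j, hS j, rfl⟩

theorem incVec_inter_apply [DecidableEq V] (S H : Finset V) {x : V} (hx : x ∈ H) :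
    incVec (S ∩ H) x = incVec S x := by
  by_cases hS : x ∈ S <;> simp [incVec, hS, hx]

theorem incVec_apply_eq_zero_of_inter_eq_empty [DecidableEq V] {S H : Finset V}
    (hSH : S ∩ H = ∅) {x : V} (hx : x ∈ H) : incVec S x = 0 := by
  rw [← incVec_inter_apply S H hx, hSH]
  simp [incVec]

theorem span_incVec_maxStableWithin_of_repeating [DecidableEq V] {G : SimpleGraph V}
    {H : Finset V} (hspan : span ℝ (incVec '' {S | MaxStable G S}) = ⊤)
    (hrep : ∀ S : Finset V, MaxStable G S → (S ∩ H).Nonempty →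
      MaxStableWithin G H (S ∩ H)) :
    span ℝ ((fun T (h : H) => incVec T h.1) '' {T | MaxStableWithin G H T}) = ⊤ := by
  let π : (V → ℝ) →ₗ[ℝ] (H → ℝ) := LinearMap.funLeft ℝ ℝ Subtype.val
  have hπ : map π ⊤ = ⊤ := by
    rw [Submodule.map_top, LinearMap.range_eq_top]
    exact LinearMap.funLeft_surjective_of_injective ℝ ℝ _ Subtype.val_injective
  rw [eq_top_iff, ← hπ, ← hspan, map_span_le]
  rintro _ ⟨S, hS, rfl⟩
  rcases (S ∩ H).eq_empty_or_nonempty with hSH | hSH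
  · convert (span ℝ _).zero_mem
    funext h
    exact incVec_apply_eq_zero_of_inter_eq_empty hSH h.2
  · refine subset_span ⟨S ∩ H, hrep S hS hSH, ?_⟩
    funext h
    exact incVec_inter_apply S H h.2

end

theorem stmt5_general {V : Type*} [Fintype V] [DecidableEq V] (G : SimpleGraph V)
    (hfi : FacetInducing G) (H : Finset V)
    (hrep : ∀ S : Finset V, MaxStable G S → (S ∩ H).Nonempty →
      MaxStableWithin G H (S ∩ H)) :
    ∃ T : Fin H.card → Finset V,
      (∀ j, MaxStableWithin G H (T j)) ∧
      LinearIndependent ℝ (fun j => fun h : {x // x ∈ H} => incVec (T j) h.1) := by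
  obtain ⟨f, hf, hli⟩ := exists_linearIndependent_fin_of_span_eq_top
    (span_incVec_maxStableWithin_of_repeating hfi.span_incVec_maxStable hrep)
    (n := H.card) (by simp)
  choose T hT hTf using hf
  exact ⟨T, hT, by rwa [funext hTf]⟩

theorem stmt5 {V : Type*} [Fintype V] [DecidableEq V] (G : SimpleGraph V)
    (hfi : FacetInducing G) (H : Finset V) (hne : H.Nonempty)
    (hrep : ∀ S : Finset V, MaxStable G S → (S ∩ H).Nonempty →
      MaxStableWithin G H (S ∩ H)) :
    ∃ T : Fin H.card → Finset V,
      (∀ j, MaxStableWithin G H (T j)) ∧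
      LinearIndependent ℝ (fun j => fun h : {x // x ∈ H} => incVec (T j) h.1) :=
  stmt5_general G hfi H hrep
end

section
/- Let G be a finite simple graph on vertex set V with n = |V|, let c : V → ℝ with c_v ≠ 0 for every v, suppose ∑_{v∈S} c_v ≤ 1 for every stable set S of G, and suppose there exist n maximal stable sets of G whose incidence vectors are linearly independent and each of which satisfies ∑_{v∈S} c_v = 1 (i.e., c^T x ≤ 1 is a full facet of STAB(G)). Let v ∈ V be a vertex of degree 2 whose two neighbors a and b are nonadjacent. Then there exists a maximal stable set S of G with a ∈ S, b ∈ S, and ∑_{u∈S} c_u = 1. -/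
theorem stmt6 {V : Type*} [Fintype V] (G : SimpleGraph V) (c : V → ℝ)
    (hc : ∀ u, c u ≠ 0)
    (hvalid : ∀ S : Finset V, IsStable G S → ∑ u ∈ S, c u ≤ 1)
    (S : Fin (Fintype.card V) → Finset V)
    (hmax : ∀ j, MaxStable G (S j))
    (hind : LinearIndependent ℝ (fun j => incVec (S j)))
    (hone : ∀ j, ∑ u ∈ S j, c u = 1)
    (v a b : V) (hab : a ≠ b) (hnb : G.neighborSet v = {a, b})
    (hnadj : ¬ G.Adj a b) :
    ∃ T : Finset V, MaxStable G T ∧ a ∈ T ∧ b ∈ T ∧ ∑ u ∈ T, c u = 1 := by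
  classical
  by_contra hcon
  push_neg at hcon
  -- basic adjacency facts
  have hva : G.Adj v a := by
    have : a ∈ G.neighborSet v := by rw [hnb]; left; rfl
    exact this
  have hvb : G.Adj v b := by
    have : b ∈ G.neighborSet v := by rw [hnb]; right; rfl
    exact this
  have hvA : v ≠ a := G.ne_of_adj hva
  have hvB : v ≠ b := G.ne_of_adj hvb
  -- indicator of {v,a,b}
  set d : V → ℝ := fun u =>
    (if u = v then (1:ℝ) else 0) + (if u = a then 1 else 0) + (if u = b then 1 else 0) with hd
  -- each S j sums d to 1
  have hdsum : ∀ j, ∑ u ∈ S j, d u = 1 := by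
    intro j
    obtain ⟨hst, hmx⟩ := hmax j
    have hnotboth : ¬ (a ∈ S j ∧ b ∈ S j) := by
      rintro ⟨ha, hb⟩
      exact hcon (S j) ⟨hst, hmx⟩ ha hb (hone j)
    have hsum : ∑ u ∈ S j, d u =
        (if v ∈ S j then (1:ℝ) else 0) + (if a ∈ S j then 1 else 0)
          + (if b ∈ S j then 1 else 0) := by
      rw [hd]
      rw [Finset.sum_add_distrib, Finset.sum_add_distrib]
      congr 1
      · congr 1
        · simp [Finset.sum_ite_eq']
        · simp [Finset.sum_ite_eq']
      · simp [Finset.sum_ite_eq']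
    rw [hsum]
    by_cases hv : v ∈ S j
    · have ha : a ∉ S j := fun ha => hst v hv a ha hva
      have hb : b ∉ S j := fun hb => hst v hv b hb hvb
      simp [hv, ha, hb]
    · -- v not in S j : some neighbor of v is in S j
      have hor : a ∈ S j ∨ b ∈ S j := by
        by_contra hno
        push_neg at hno
        obtain ⟨ha, hb⟩ := hno
        have hstab : IsStable G (insert v (S j)) := by
          intro u hu w hw
          rcases Finset.mem_insert.1 hu with hu | hu <;>
            rcases Finset.mem_insert.1 hw with hw | hw
          · subst hu; subst hw; exact G.irrefl
          · intro hadj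
            rw [hu] at hadj
            have : w ∈ G.neighborSet v := hadj
            rw [hnb] at this
            rcases this with h | h
            · exact ha (h ▸ hw)
            · exact hb (h ▸ hw)
          · intro hadj
            rw [hw] at hadj
            have : u ∈ G.neighborSet v := hadj.symm
            rw [hnb] at this
            rcases this with h | h
            · exact ha (h ▸ hu)
            · exact hb (h ▸ hu)
          · exact hst u hu w hw
        have := hmx _ hstab (Finset.subset_insert _ _)
        exact hv (this ▸ Finset.mem_insert_self v (S j))
      rcases hor with ha | hb
      · have hb : b ∉ S j := fun hb => hnotboth ⟨ha, hb⟩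
        simp [hv, ha, hb]
      · have ha : a ∉ S j := fun ha => hnotboth ⟨ha, hb⟩
        simp [hv, ha, hb]
  -- the incidence vectors form a basis of V → ℝ
  have hcard : Fintype.card (Fin (Fintype.card V)) = Module.finrank ℝ (V → ℝ) := by
    simp [Module.finrank_pi]
  haveI : Nonempty (Fin (Fintype.card V)) :=
    ⟨⟨0, Fintype.card_pos_iff.2 ⟨v⟩⟩⟩
  let B := basisOfLinearIndependentOfCardEqFinrank hind hcard
  have hB : ∀ j, B j = incVec (S j) := fun j => by
    simp [B, coe_basisOfLinearIndependentOfCardEqFinrank]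
  -- the functional x ↦ ∑ u, (c u - d u) * x u vanishes on the basis
  let φ : (V → ℝ) →ₗ[ℝ] ℝ :=
    ∑ u : V, (c u - d u) • (LinearMap.proj u : (V → ℝ) →ₗ[ℝ] ℝ)
  have hφ : ∀ x : V → ℝ, φ x = ∑ u : V, (c u - d u) * x u := by
    intro x
    simp [φ, LinearMap.sum_apply, smul_eq_mul]
  have hφB : ∀ j, φ (B j) = 0 := by
    intro j
    rw [hB, hφ]
    have : ∀ u : V, (c u - d u) * incVec (S j) u
        = if u ∈ S j then (c u - d u) else 0 := by
      intro u
      simp only [incVec, Set.indicator_apply, Finset.mem_coe, Pi.one_apply]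
      split <;> simp
    simp_rw [this]
    rw [Finset.sum_ite_mem, Finset.univ_inter, Finset.sum_sub_distrib,
      hone j, hdsum j]
    ring
  have hφzero : φ = 0 := by
    apply B.ext
    intro j
    simp [hφB j]
  -- hence c = d
  have hcd : ∀ u, c u = d u := by
    intro u
    have := congrArg (fun ψ => ψ (Pi.single u (1:ℝ))) hφzero
    simp only [LinearMap.zero_apply] at this
    rw [hφ] at this
    have hsimp : ∀ w : V, (c w - d w) * (Pi.single u (1:ℝ) : V → ℝ) w
        = if w = u then c u - d u else 0 := by
      intro w
      rw [Pi.single_apply]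
      split
      · rename_i h; subst h; ring
      · ring
    simp_rw [hsimp] at this
    rw [Finset.sum_ite_eq' Finset.univ u (fun _ => c u - d u)] at this
    simp at this
    linarith
  -- contradiction: {a,b} is stable but c a + c b = 2
  have hstab : IsStable G ({a, b} : Finset V) := by
    intro u hu w hw
    simp only [Finset.mem_insert, Finset.mem_singleton] at hu hw
    rcases hu with rfl | rfl <;> rcases hw with rfl | rfl
    · exact G.irrefl
    · exact hnadj
    · exact fun h => hnadj h.symm
    · exact G.irrefl
  have hle := hvalid _ hstab
  rw [Finset.sum_pair hab] at hle
  have hca : c a = 1 := by rw [hcd a, hd]; simp [hvA.symm, hab]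
  have hcb : c b = 1 := by rw [hcd b, hd]; simp [hvB.symm, hab.symm]
  rw [hca, hcb] at hle
  linarith
end

section
/- Every triangle-free facet-inducing finite simple graph is prime: if G is facet-inducing and no three vertices of G are pairwise adjacent, then G has no module M with 2 ≤ |M| < |V|. -/
lemma incVec_apply {V : Type*} (S : Finset V) (v : V) [Decidable (v ∈ S)] :
    incVec S v = if v ∈ S then 1 else 0 := by
  by_cases h : v ∈ S <;> simp [incVec, h]

/-- Weighted sum linear functional. -/
noncomputable def wsum {V : Type*} [Fintype V] (c : V → ℝ) (A : Finset V) :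
    (V → ℝ) →ₗ[ℝ] ℝ where
  toFun x := ∑ v ∈ A, c v * x v
  map_add' x y := by simp [mul_add, Finset.sum_add_distrib]
  map_smul' r x := by simp [Finset.mul_sum, mul_left_comm]

lemma wsum_incVec {V : Type*} [Fintype V] [DecidableEq V] (c : V → ℝ) (A S : Finset V) :
    wsum c A (incVec S) = ∑ v ∈ A ∩ S, c v := by
  classical
  rw [← Finset.filter_mem_eq_inter, Finset.sum_filter]
  simp only [wsum, LinearMap.coe_mk, AddHom.coe_mk]
  refine Finset.sum_congr rfl fun v _ => ?_
  rw [incVec_apply]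
  by_cases h : v ∈ S <;> simp [h]

theorem stmt8 {V : Type*} [Fintype V] (G : SimpleGraph V) (hfi : FacetInducing G)
    (htf : G.CliqueFree 3) :
    ¬ ∃ M : Set V, (∀ v ∉ M, (∀ m ∈ M, G.Adj v m) ∨ (∀ m ∈ M, ¬ G.Adj v m)) ∧
      2 ≤ M.ncard ∧ M.ncard < Fintype.card V := by
  classical
  rintro ⟨M, hmod, h2, hlt⟩
  obtain ⟨c, hc0, hstab, S, hmax, hli, htight⟩ := hfi
  have hposV : 0 < Nat.card V := by
    rw [Nat.card_eq_fintype_card]; omega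
  haveI : Nonempty (Fin (Nat.card V)) := ⟨⟨0, hposV⟩⟩
  have hcard : Fintype.card (Fin (Nat.card V)) = Module.finrank ℝ (V → ℝ) := by
    simp [Nat.card_eq_fintype_card, Module.finrank_fintype_fun_eq_card]
  let B := basisOfLinearIndependentOfCardEqFinrank hli hcard
  have hB : ∀ j, B j = incVec (S j) := fun j => by
    have := coe_basisOfLinearIndependentOfCardEqFinrank hli hcard
    exact congrFun this j
  -- a linear functional vanishing on all incVec (S j) is zero
  have hzero : ∀ f : (V → ℝ) →ₗ[ℝ] ℝ, (∀ j, f (incVec (S j)) = 0) → f = 0 := by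
    intro f hf
    refine B.ext fun j => ?_
    rw [hB j]; simp [hf j]
  obtain ⟨m1, m2, hm1, hm2, hne⟩ :=
    (Set.one_lt_ncard_iff (Set.toFinite M)).mp (by omega)
  set A : Finset V := M.toFinset with hA
  have hmA : ∀ v, v ∈ A ↔ v ∈ M := fun v => Set.mem_toFinset
  by_cases hMs : ∀ u ∈ M, ∀ w ∈ M, ¬ G.Adj u w
  · -- M is stable: every tight maximal stable set contains M or is disjoint from it
    have key : ∀ j, (M ⊆ ↑(S j)) ∨ (∀ m ∈ M, m ∉ S j) := by
      intro j
      by_cases hex : ∃ v ∈ S j, v ∉ M ∧ ∀ m ∈ M, G.Adj v m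
      · obtain ⟨v, hvS, hvM, hvall⟩ := hex
        right
        intro m hm hmS
        exact (hmax j).1 v hvS m hmS (hvall m hm)
      · left
        push_neg at hex
        have hstable : IsStable G (S j ∪ A) := by
          intro u hu w hw
          rw [Finset.mem_union] at hu hw
          have hcase : ∀ x ∈ S j, ∀ y ∈ M, ¬ G.Adj x y := by
            intro x hx y hy
            by_cases hxM : x ∈ M
            · exact hMs x hxM y hy
            · rcases hmod x hxM with hall | hnone
              · obtain ⟨m, hm, hnadj⟩ := hex x hx hxM
                exact absurd (hall m hm) hnadj
              · exact hnone y hy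
          rcases hu with hu | hu <;> rcases hw with hw | hw
          · exact (hmax j).1 u hu w hw
          · exact hcase u hu w ((hmA w).mp hw)
          · intro hadj
            exact hcase w hw u ((hmA u).mp hu) hadj.symm
          · exact hMs u ((hmA u).mp hu) w ((hmA w).mp hw)
        have heq : S j = S j ∪ A := (hmax j).2 _ hstable Finset.subset_union_left
        intro m hm
        have : m ∈ S j ∪ A := Finset.mem_union_right _ ((hmA m).mpr hm)
        rw [← heq] at this
        exact this
    set f : (V → ℝ) →ₗ[ℝ] ℝ :=
      LinearMap.proj (R := ℝ) (φ := fun _ : V => ℝ) m1 -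
        LinearMap.proj (R := ℝ) (φ := fun _ : V => ℝ) m2 with hf
    have hfz : f = 0 := by
      refine hzero f fun j => ?_
      rcases key j with h | h
      · have h1 : m1 ∈ S j := h hm1
        have h2' : m2 ∈ S j := h hm2
        simp [hf, LinearMap.sub_apply, LinearMap.proj_apply, incVec_apply, h1, h2']
      · have h1 : m1 ∉ S j := h m1 hm1
        have h2' : m2 ∉ S j := h m2 hm2
        simp [hf, LinearMap.sub_apply, LinearMap.proj_apply, incVec_apply, h1, h2']
    have : f (Pi.single m1 1) = 0 := by rw [hfz]; rfl
    simp [hf, LinearMap.sub_apply, LinearMap.proj_apply, Pi.single_eq_same,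
      Pi.single_eq_of_ne hne.symm] at this
  · -- M is not stable: then no vertex outside M sees M (triangle-free)
    push_neg at hMs
    obtain ⟨a1, ha1, a2, ha2, hadj⟩ := hMs
    have hnoadj : ∀ v ∉ M, ∀ m ∈ M, ¬ G.Adj v m := by
      intro v hv
      rcases hmod v hv with hall | hnone
      · exfalso
        exact htf {v, a1, a2}
          (SimpleGraph.is3Clique_triple_iff.mpr ⟨hall a1 ha1, hall a2 ha2, hadj⟩)
      · exact hnone
    set g := wsum c A with hg
    set h := wsum c Aᶜ with hh
    have hsd : ∀ T : Finset V, T ∩ Aᶜ = T \ A := by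
      intro T; ext x; simp [Finset.mem_sdiff, and_comm]
    have hgh : ∀ j, g (incVec (S j)) + h (incVec (S j)) = 1 := by
      intro j
      rw [hg, hh, wsum_incVec, wsum_incVec, Finset.inter_comm A, Finset.inter_comm Aᶜ, hsd,
        Finset.sum_inter_add_sum_sdiff]
      exact htight j
    -- all tight sets have the same weight inside M
    have hle : ∀ j k, g (incVec (S j)) ≤ g (incVec (S k)) := by
      intro j k
      have hstable : IsStable G ((A ∩ S j) ∪ (S k \ A)) := by
        intro u hu w hw
        rw [Finset.mem_union] at hu hw
        have hcross : ∀ x, x ∈ A ∩ S j → ∀ y, y ∈ S k \ A → ¬ G.Adj x y := by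
          intro x hx y hy hadj'
          rw [Finset.mem_inter] at hx
          rw [Finset.mem_sdiff] at hy
          exact hnoadj y (fun hyM => hy.2 ((hmA y).mpr hyM)) x ((hmA x).mp hx.1) hadj'.symm
        rcases hu with hu | hu <;> rcases hw with hw | hw
        · exact (hmax j).1 u (Finset.mem_inter.mp hu).2 w (Finset.mem_inter.mp hw).2
        · exact hcross u hu w hw
        · intro hadj'; exact hcross w hw u hu hadj'.symm
        · exact (hmax k).1 u (Finset.mem_sdiff.mp hu).1 w (Finset.mem_sdiff.mp hw).1
      have hdisj : Disjoint (A ∩ S j) (S k \ A) := by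
        refine Finset.disjoint_left.mpr fun x hx hx' => ?_
        exact (Finset.mem_sdiff.mp hx').2 (Finset.mem_inter.mp hx).1
      have hT := hstab _ hstable
      rw [Finset.sum_union hdisj] at hT
      have hj' : g (incVec (S j)) = ∑ v ∈ A ∩ S j, c v := by rw [hg, wsum_incVec]
      have hk' : g (incVec (S k)) = ∑ v ∈ A ∩ S k, c v := by rw [hg, wsum_incVec]
      have hhk : h (incVec (S k)) = ∑ v ∈ S k \ A, c v := by
        rw [hh, wsum_incVec, Finset.inter_comm, hsd]
      have hk1 := hgh k
      rw [hhk, hk'] at hk1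
      rw [hj', hk']
      linarith
    have heq : ∀ j k, g (incVec (S j)) = g (incVec (S k)) := fun j k =>
      le_antisymm (hle j k) (hle k j)
    set j0 : Fin (Nat.card V) := ⟨0, hposV⟩ with hj0
    set a : ℝ := g (incVec (S j0)) with ha
    set f : (V → ℝ) →ₗ[ℝ] ℝ := (1 - a) • g - a • h with hf
    have hfz : f = 0 := by
      refine hzero f fun j => ?_
      have h1 : g (incVec (S j)) = a := heq j j0
      have h2' : h (incVec (S j)) = 1 - a := by
        have := hgh j; rw [h1] at this; linarith
      simp [hf, h1, h2']
      ring
    -- evaluate on a vertex in M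
    have hin : f (incVec {a1}) = (1 - a) * c a1 := by
      have hgv : g (incVec {a1}) = c a1 := by
        rw [hg, wsum_incVec, Finset.inter_singleton_of_mem ((hmA a1).mpr ha1),
          Finset.sum_singleton]
      have hhv : h (incVec {a1}) = 0 := by
        rw [hh, wsum_incVec]
        have : Aᶜ ∩ {a1} = ∅ := by
          refine Finset.eq_empty_of_forall_notMem fun x hx => ?_
          rw [Finset.mem_inter, Finset.mem_compl, Finset.mem_singleton] at hx
          exact hx.1 (hx.2 ▸ (hmA a1).mpr ha1)
        rw [this, Finset.sum_empty]
      simp [hf, hgv, hhv]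
    -- there is a vertex outside M
    obtain ⟨w, hw⟩ : ∃ w, w ∉ M := by
      by_contra hcon
      push_neg at hcon
      have : M = Set.univ := Set.eq_univ_of_forall hcon
      rw [this, Set.ncard_univ, Nat.card_eq_fintype_card] at hlt
      omega
    have hout : f (incVec {w}) = -(a * c w) := by
      have hgv : g (incVec {w}) = 0 := by
        rw [hg, wsum_incVec]
        have : A ∩ {w} = ∅ := by
          refine Finset.eq_empty_of_forall_notMem fun x hx => ?_
          rw [Finset.mem_inter, Finset.mem_singleton] at hx
          exact hw (hx.2 ▸ (hmA x).mp hx.1)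
        rw [this, Finset.sum_empty]
      have hhv : h (incVec {w}) = c w := by
        rw [hh, wsum_incVec, Finset.inter_singleton_of_mem
          (Finset.mem_compl.mpr (fun hwA => hw ((hmA w).mp hwA))), Finset.sum_singleton]
      simp [hf, hgv, hhv]
    rw [hfz] at hin hout
    simp at hin hout
    rcases hin with hin | hin
    · rcases hout with hout | hout
      · rw [hout] at hin; norm_num at hin
      · exact hc0 w hout
    · exact hc0 a1 hin
end

section
/- Let G be a connected paw-free finite simple graph. Then G is triangle-free or complete multipartite: either no three vertices of G are pairwise adjacent, or the vertex set of G can be partitioned into nonempty stable sets such that any two vertices lying in different parts of the partition are adjacent. -/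
/-! In a paw-free graph a triangle spreads along edges: if `v` lies in a triangle `vbc` and
`vw` is an edge, then `w` is adjacent to `b` or `c`, for otherwise `vbc` with the pendant
edge `vw` is an induced paw. Hence in a connected paw-free graph containing a triangle every
edge lies in a triangle. This forces every vertex to be adjacent to an end of every edge `ac`:
if `b` is adjacent to some `u` adjacent to `a`, then three paw exclusions around a triangle
`uat` give that `b` is adjacent to `a` or `c`, and induction along a walk from `b` to `a`
does the rest. So non-adjacency is transitive, and a graph whose non-adjacency relation
is transitive is complete multipartite, the parts being its non-adjacency classes. -/

/-- The paw: vertices `0,1,2,3` with edges `01, 02, 12, 03`. -/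
def pawGraph : SimpleGraph (Fin 4) :=
  SimpleGraph.fromRel (fun a b =>
    (a = 0 ∧ b = 1) ∨ (a = 0 ∧ b = 2) ∨ (a = 1 ∧ b = 2) ∨ (a = 0 ∧ b = 3))

namespace SimpleGraph

variable {V : Type*} {G : SimpleGraph V}

lemma IsCompleteMultipartite.exists_partition (h : G.IsCompleteMultipartite) :
    ∃ P : Set (Set V),
      (∀ p ∈ P, p.Nonempty) ∧
      (∀ x : V, ∃ p ∈ P, x ∈ p) ∧
      (∀ p ∈ P, ∀ q ∈ P, p = q ∨ Disjoint p q) ∧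
      (∀ p ∈ P, ∀ u ∈ p, ∀ w ∈ p, ¬ G.Adj u w) ∧
      (∀ p ∈ P, ∀ q ∈ P, p ≠ q → ∀ u ∈ p, ∀ w ∈ q, G.Adj u w) := by
  have hP := Setoid.isPartition_classes h.setoid
  refine ⟨h.setoid.classes, fun p hp => Setoid.nonempty_of_mem_partition hP hp,
    fun x => ⟨_, h.setoid.mem_classes x, h.setoid.refl x⟩,
    fun p hp q hq => or_iff_not_imp_left.2 (hP.pairwiseDisjoint hp hq),
    fun p hp u hu w hw => h.setoid.rel_iff_exists_classes.2 ⟨p, hp, hu, hw⟩,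
    fun p hp q hq hpq u hu w hw => ?_⟩
  by_contra huw
  obtain ⟨r, hr, hur, hwr⟩ := h.setoid.rel_iff_exists_classes.1 huw
  exact hpq ((Setoid.eq_of_mem_classes hp hu hr hur).trans
    (Setoid.eq_of_mem_classes hq hw hr hwr).symm)

lemma adj_or_adj_of_isEmpty_pawGraph_embedding (hpaw : IsEmpty (pawGraph ↪g G))
    {x y z d : V} (hxy : G.Adj x y) (hxz : G.Adj x z) (hyz : G.Adj y z) (hdx : G.Adj d x) :
    G.Adj d y ∨ G.Adj d z := by
  by_contra! ⟨hdy, hdz⟩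
  have hd_ne_y : d ≠ y := by rintro rfl; exact hdz hyz
  have hd_ne_z : d ≠ z := by rintro rfl; exact hdy hyz.symm
  refine hpaw.false ⟨⟨![x, y, z, d], fun i j hij => ?_⟩, fun {i j} => ?_⟩
  · fin_cases i <;> fin_cases j <;> simp_all [hxy.ne, hxz.ne, hyz.ne, hdx.ne, eq_comm]
  · change G.Adj (![x, y, z, d] i) (![x, y, z, d] j) ↔ _
    fin_cases i <;> fin_cases j <;>
      simp [pawGraph, hxy, hxz, hyz, hdx, hxy.symm, hxz.symm, hyz.symm, hdy, hdz,
        adj_comm _ _ d]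

lemma commonNeighbors_nonempty_of_isEmpty_pawGraph_embedding (hpaw : IsEmpty (pawGraph ↪g G))
    {v b c w : V} (hvb : G.Adj v b) (hvc : G.Adj v c) (hbc : G.Adj b c) (hvw : G.Adj v w) :
    (G.commonNeighbors v w).Nonempty := by
  rcases adj_or_adj_of_isEmpty_pawGraph_embedding hpaw hvb hvc hbc hvw.symm with hwb | hwc
  · exact ⟨b, hvb, hwb⟩
  · exact ⟨c, hvc, hwc⟩

lemma exists_triangle_of_reachable (hpaw : IsEmpty (pawGraph ↪g G)) {v b c w : V}
    (hvb : G.Adj v b) (hvc : G.Adj v c) (hbc : G.Adj b c) (hvw : G.Reachable v w) :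
    ∃ b c, G.Adj w b ∧ G.Adj w c ∧ G.Adj b c := by
  obtain ⟨p⟩ := hvw
  induction p generalizing b c with
  | nil => exact ⟨b, c, hvb, hvc, hbc⟩
  | cons hvu _ ih =>
    obtain ⟨t, hvt, hut⟩ :=
      commonNeighbors_nonempty_of_isEmpty_pawGraph_embedding hpaw hvb hvc hbc hvu
    exact ih hvu.symm hut hvt

lemma commonNeighbors_nonempty_of_connected (hpaw : IsEmpty (pawGraph ↪g G))
    (hconn : G.Connected) (h3 : ¬ G.CliqueFree 3) {u v : V} (huv : G.Adj u v) :
    (G.commonNeighbors u v).Nonempty := by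
  classical
  obtain ⟨s, hs⟩ := not_forall.1 h3
  obtain ⟨x, y, z, hxy, hxz, hyz, -⟩ := is3Clique_iff.1 (not_not.1 hs)
  obtain ⟨b, c, hub, huc, hbc⟩ := exists_triangle_of_reachable hpaw hxy hxz hyz (hconn x u)
  exact commonNeighbors_nonempty_of_isEmpty_pawGraph_embedding hpaw hub huc hbc huv

lemma adj_or_adj_of_adj_of_adj (hpaw : IsEmpty (pawGraph ↪g G))
    (htri : ∀ ⦃u v⦄, G.Adj u v → (G.commonNeighbors u v).Nonempty)
    {a b c u : V} (hac : G.Adj a c) (hbu : G.Adj b u) (hua : G.Adj u a) :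
    G.Adj b a ∨ G.Adj b c := by
  obtain ⟨t, hut, hat⟩ := htri hua
  rcases adj_or_adj_of_isEmpty_pawGraph_embedding hpaw hua hut hat hbu with hba | hbt
  · exact .inl hba
  rcases adj_or_adj_of_isEmpty_pawGraph_embedding hpaw hua.symm hat hut hac.symm with hcu | hct
  · exact adj_or_adj_of_isEmpty_pawGraph_embedding hpaw hua hcu.symm hac hbu
  · exact adj_or_adj_of_isEmpty_pawGraph_embedding hpaw hat.symm hct.symm hac hbt

lemma adj_or_adj_of_walk (hpaw : IsEmpty (pawGraph ↪g G))
    (htri : ∀ ⦃u v⦄, G.Adj u v → (G.commonNeighbors u v).Nonempty)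
    {a b c : V} (hac : G.Adj a c) (p : G.Walk b a) :
    G.Adj b a ∨ G.Adj b c := by
  induction p with
  | nil => exact .inr hac
  | cons hbu _ ih =>
    rcases ih hac with hua | huc
    · exact adj_or_adj_of_adj_of_adj hpaw htri hac hbu hua
    · exact (adj_or_adj_of_adj_of_adj hpaw htri hac.symm hbu huc).symm

theorem isCompleteMultipartite_of_isEmpty_pawGraph_embedding (hpaw : IsEmpty (pawGraph ↪g G))
    (hconn : G.Connected) (h3 : ¬ G.CliqueFree 3) : G.IsCompleteMultipartite := by
  refine ⟨fun a b c hnab hnbc hac => ?_⟩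
  obtain ⟨p⟩ := hconn b a
  have htri : ∀ ⦃u v⦄, G.Adj u v → (G.commonNeighbors u v).Nonempty :=
    fun _ _ => commonNeighbors_nonempty_of_connected hpaw hconn h3
  rcases adj_or_adj_of_walk hpaw htri hac p with hba | hbc
  · exact hnab hba.symm
  · exact hnbc hbc

end SimpleGraph

theorem stmt19_general {V : Type*} (G : SimpleGraph V)
    (hconn : G.Connected)
    (hpaw : IsEmpty (pawGraph ↪g G)) :
    G.CliqueFree 3 ∨
      ∃ P : Set (Set V),
        (∀ p ∈ P, p.Nonempty) ∧
        (∀ x : V, ∃ p ∈ P, x ∈ p) ∧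
        (∀ p ∈ P, ∀ q ∈ P, p = q ∨ Disjoint p q) ∧
        (∀ p ∈ P, ∀ u ∈ p, ∀ w ∈ p, ¬ G.Adj u w) ∧
        (∀ p ∈ P, ∀ q ∈ P, p ≠ q → ∀ u ∈ p, ∀ w ∈ q, G.Adj u w) :=
  (em (G.CliqueFree 3)).imp_right fun h3 =>
    SimpleGraph.IsCompleteMultipartite.exists_partition <|
      SimpleGraph.isCompleteMultipartite_of_isEmpty_pawGraph_embedding hpaw hconn h3

theorem stmt19 {V : Type*} [Fintype V] (G : SimpleGraph V)
    (hconn : G.Connected)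
    (hpaw : IsEmpty (pawGraph ↪g G)) :
    G.CliqueFree 3 ∨
      ∃ P : Set (Set V),
        (∀ p ∈ P, p.Nonempty) ∧
        (∀ x : V, ∃ p ∈ P, x ∈ p) ∧
        (∀ p ∈ P, ∀ q ∈ P, p = q ∨ Disjoint p q) ∧
        (∀ p ∈ P, ∀ u ∈ p, ∀ w ∈ p, ¬ G.Adj u w) ∧
        (∀ p ∈ P, ∀ q ∈ P, p ≠ q → ∀ u ∈ p, ∀ w ∈ q, G.Adj u w) :=
  stmt19_general G hconn hpaw
end
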